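/- The polynomial x + x²y + z³ + t² is irreducible in ℂ[x,y,z,t]. -/

import Mathlib

/-!
Viewed as a polynomial in `y` over `R[x, z, t]`, the Russell cubic is linear:
`x² · y + (x + z³ + t²)`. A linear polynomial over a domain is irreducible as soon as its two
coefficients are relatively prime, and they are here because `x` is prime and does not divide
`x + z³ + t²` (this polynomial takes the value `1` at `x = 0, z = 1, t = 0`).
-/

open MvPolynomial

theorem Prime.isRelPrime_pow_of_not_dvd {M : Type*} [CommMonoidWithZero M] [IsCancelMulZero M]
    {p b : M} (hp : Prime p) (hpb : ¬p ∣ b) (n : ℕ) : IsRelPrime (p ^ n) b := by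
  intro c hcp hcb
  obtain ⟨i, -, hc⟩ := (dvd_prime_pow hp n).mp hcp
  cases i with
  | zero => simpa using hc
  | succ i => exact absurd ((dvd_pow_self p i.succ_ne_zero).trans (hc.dvd'.trans hcb)) hpb

theorem MvPolynomial.eval_eq_zero_of_X_dvd {R σ : Type*} [CommSemiring R] {i : σ}
    {p : MvPolynomial σ R} (h : X i ∣ p) {v : σ → R} (hv : v i = 0) : eval v p = 0 := by
  obtain ⟨q, rfl⟩ := h
  simp [hv]

noncomputable def russellCubic (R : Type*) [CommSemiring R] : MvPolynomial (Fin 4) R :=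
  X 0 + X 0 ^ 2 * X 1 + X 2 ^ 3 + X 3 ^ 2

theorem finSuccEquiv_rename_swap_russellCubic (R : Type*) [CommSemiring R] :
    finSuccEquiv R 3 (rename (Equiv.swap 0 1) (russellCubic R)) =
      Polynomial.C (X 0 ^ 2) * Polynomial.X + Polynomial.C (X 0 + X 1 ^ 3 + X 2 ^ 2) := by
  have hX1 : finSuccEquiv R 3 (X 1) = Polynomial.C (X 0) := finSuccEquiv_X_succ (j := 0)
  have hX2 : finSuccEquiv R 3 (X 2) = Polynomial.C (X 1) := finSuccEquiv_X_succ (j := 1)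
  have hX3 : finSuccEquiv R 3 (X 3) = Polynomial.C (X 2) := finSuccEquiv_X_succ (j := 2)
  simp [russellCubic, Equiv.swap_apply_of_ne_of_ne, finSuccEquiv_X_zero, hX1, hX2, hX3]
  ring

theorem isRelPrime_X_zero_sq_X_zero_add_X_one_pow_three_add_X_two_sq (R : Type*) [CommRing R]
    [IsDomain R] : IsRelPrime (X 0 ^ 2 : MvPolynomial (Fin 3) R) (X 0 + X 1 ^ 3 + X 2 ^ 2) := by
  refine (X_prime (i := 0)).isRelPrime_pow_of_not_dvd (fun h => ?_) 2
  simpa using eval_eq_zero_of_X_dvd h (v := ![0, 1, 0]) rfl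

theorem irreducible_russellCubic (R : Type*) [CommRing R] [IsDomain R] :
    Irreducible (russellCubic R) := by
  let e := (renameEquiv R (Equiv.swap (0 : Fin 4) 1)).trans (finSuccEquiv R 3)
  rw [← MulEquiv.irreducible_iff e.toMulEquiv]
  change Irreducible (finSuccEquiv R 3 (rename _ _))
  rw [finSuccEquiv_rename_swap_russellCubic]
  exact Polynomial.irreducible_C_mul_X_add_C (pow_ne_zero 2 (X_ne_zero 0))
    (isRelPrime_X_zero_sq_X_zero_add_X_one_pow_three_add_X_two_sq R)

/-- The Russell cubic polynomial `x + x²y + z³ + t²` is irreducible in `ℂ[x,y,z,t]`. -/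
theorem russellCubic_irreducible :
    Irreducible ((X 0 + X 0 ^ 2 * X 1 + X 2 ^ 3 + X 3 ^ 2 : MvPolynomial (Fin 4) ℂ)) :=
  irreducible_russellCubic ℂ
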